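/- arXiv:1210.3146 — 7 statements merged into one kernel-verified Lean document; each statement's English description precedes it below -/
import Mathlib

section
/- Let w be a privileged word and let u be a privileged prefix of w. Then u is also a suffix of w. Symmetrically, every privileged suffix of a privileged word w is also a prefix of w. -/
/-- Number of occurrences of `u` as a factor of `w` (positions are 0-indexed). -/
noncomputable def occCount {A : Type*} (u w : List A) : ℕ :=
  Set.ncard {i : ℕ | i + u.length ≤ w.length ∧ (w.drop i).take u.length = u}

/-- `v` is a complete first return to `u`: `u` is a prefix and a suffix of `v`,
and `u` has exactly two occurrences in `v`. -/
def IsCompleteFirstReturn {A : Type*} (v u : List A) : Prop :=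
  u <+: v ∧ u <:+ v ∧ occCount u v = 2

/-- Privileged words: the empty word and the single letters are privileged, and a word of
length at least 2 is privileged if it is a complete first return to a shorter privileged word. -/
inductive Privileged {A : Type*} : List A → Prop where
  | nil : Privileged ([] : List A)
  | single (a : A) : Privileged [a]
  | ret (w u : List A) : 2 ≤ w.length → u.length < w.length → Privileged u →
      IsCompleteFirstReturn w u → Privileged w

/-- A complete return word: a complete first return to some word
(the empty word counted by convention; letters are complete first returns to the empty word). -/
def IsCompleteReturnWord {A : Type*} (v : List A) : Prop :=
  v = [] ∨ ∃ u : List A, IsCompleteFirstReturn v u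

/-- Position `i` of `w` (1-based, `1 ≤ i ≤ |w|`) introduces the factor `u`:
`u` occurs in `w` ending at position `i` and `u` occurs exactly once in the prefix `w[1,i]`. -/
def Introduces {A : Type*} (w : List A) (i : ℕ) (u : List A) : Prop :=
  1 ≤ i ∧ i ≤ w.length ∧ u <:+ w.take i ∧ occCount u (w.take i) = 1

/-- A finite word is rich if it has exactly `|w| + 1` distinct palindromic factors. -/
noncomputable def RichWord {A : Type*} (w : List A) : Prop :=
  Set.ncard {u : List A | u <:+: w ∧ u.reverse = u} = w.length + 1

/-- `u` is a (finite) factor of the infinite word `w`. -/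
def IsFactorInf {A : Type*} (w : ℕ → A) (u : List A) : Prop :=
  ∃ i : ℕ, u = (List.range u.length).map fun k => w (i + k)

/-- A Q-property of finite words. -/
structure IsQProperty {A : Type*} (Q : List A → Prop) : Prop where
  q_nil : Q []
  q_single : ∀ a : A, Q [a]
  ends_at_every_position : ∀ (w : List A) (i : ℕ), 1 ≤ i → i ≤ w.length →
    ∃ u : List A, u ≠ [] ∧ u <:+ w.take i ∧ Q u
  introduces_at_most_one : ∀ (w : List A) (i : ℕ) (u v : List A),
    Introduces w i u → Introduces w i v → Q u → Q v → u = v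

/-- Q-complexity of an infinite word: the number of distinct factors of length `n`
having property `Q`. -/
noncomputable def qComplexityInf {A : Type*} (w : ℕ → A) (Q : List A → Prop) (n : ℕ) : ℕ :=
  Set.ncard {u : List A | IsFactorInf w u ∧ Q u ∧ u.length = n}

/-- Privileged complexity of an infinite word. -/
noncomputable def privComplexityInf {A : Type*} (w : ℕ → A) (n : ℕ) : ℕ :=
  Set.ncard {u : List A | IsFactorInf w u ∧ Privileged u ∧ u.length = n}

/-- Palindromic complexity of an infinite word. -/
noncomputable def palComplexityInf {A : Type*} (w : ℕ → A) (n : ℕ) : ℕ :=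
  Set.ncard {u : List A | IsFactorInf w u ∧ u.reverse = u ∧ u.length = n}

/-- An infinite word is ultimately periodic if it is of the form `u v v v ⋯`
with `v` nonempty. -/
def UltimatelyPeriodic {A : Type*} (w : ℕ → A) : Prop :=
  ∃ u v : List A, v ≠ [] ∧ ∀ n : ℕ, w n =
    if n < u.length then u.getD n (w 0)
    else v.getD ((n - u.length) % v.length) (w 0)

/-- An infinite word is Sturmian if it has exactly `n + 1` distinct factors of
length `n` for every `n`. -/
def Sturmian {A : Type*} (w : ℕ → A) : Prop :=
  ∀ n : ℕ, Set.ncard {u : List A | IsFactorInf w u ∧ u.length = n} = n + 1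

/-- A finite binary word is balanced: its set of factors is balanced. -/
def BalancedWord (x : List Bool) : Prop :=
  ∀ u v : List Bool, u <:+: x → v <:+: x → u.length = v.length →
    ((u.count true : ℤ) - (v.count true : ℤ)).natAbs ≤ 1

/-- `u` is a right special factor of the infinite word `w`. -/
def RightSpecial {A : Type*} (w : ℕ → A) (u : List A) : Prop :=
  ∃ a b : A, a ≠ b ∧ IsFactorInf w (u ++ [a]) ∧ IsFactorInf w (u ++ [b])

/-- The Thue-Morse word: the `n`-th letter is the parity of the number of ones in the
binary expansion of `n` (`false` = 0, `true` = 1). -/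
def thueMorse (n : ℕ) : Bool := (Nat.digits 2 n).count 1 % 2 == 1

/-!
Induct on `|w|`. A privileged word `w` of length at least two is a complete first return to a
shorter privileged word `v`, and `v` occurs in `w` only as its prefix and as its suffix. A
privileged prefix `u` of `w` is comparable with `v`. If `u` is a prefix of `v`, it is a suffix
of `v` by induction, hence of `w`. If `v` is a prefix of `u` and `u ≠ w`, then by induction `v`
is also a suffix of `u`; this occurrence of `v` in `w` must be the first or the last one, which
forces `u = v` or `u = w`. Privileged suffixes are handled symmetrically.
-/

theorem Set.eq_or_eq_of_ncard_eq_two {α : Type*} {s : Set α} {a b c : α} (hs : s.ncard = 2)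
    (ha : a ∈ s) (hb : b ∈ s) (hab : a ≠ b) (hc : c ∈ s) : c = a ∨ c = b := by
  have hpair : ({a, b} : Set α) = s :=
    Set.eq_of_subset_of_ncard_le (Set.pair_subset ha hb) (by rw [hs, Set.ncard_pair hab])
      (Set.finite_of_ncard_ne_zero (by omega))
  rw [← hpair] at hc
  exact hc

theorem IsCompleteFirstReturn.eq_nil_or_eq_nil_of_append_eq {A : Type*} {w u p s : List A}
    (hret : IsCompleteFirstReturn w u) (hlt : u.length < w.length) (h : p ++ u ++ s = w) :
    p = [] ∨ s = [] := by
  obtain ⟨⟨s₀, rfl⟩, ⟨p₀, hp₀⟩, hocc⟩ := hret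
  have occurs_at : ∀ x y : List A, x ++ u ++ y = u ++ s₀ →
      x.length ∈ {i : ℕ | i + u.length ≤ (u ++ s₀).length ∧
        ((u ++ s₀).drop i).take u.length = u} := by
    rintro x y hxy
    rw [← hxy]
    exact ⟨by simp, by simp⟩
  have hfirst := occurs_at [] s₀ rfl
  have hlast := occurs_at p₀ [] (by simpa using hp₀)
  have hlen := congrArg List.length h
  have hlen₀ := congrArg List.length hp₀
  simp only [List.length_append] at hlen hlen₀ hlt
  rcases Set.eq_or_eq_of_ncard_eq_two hocc hfirst hlast (by simp only [List.length_nil]; omega)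
      (occurs_at p s h) with hp | hp
  · exact Or.inl (List.length_eq_zero_iff.mp hp)
  · exact Or.inr (List.length_eq_zero_iff.mp (by omega))

section

variable {A : Type*} {w v u : List A}

theorem isSuffix_of_isPrefix_of_isCompleteFirstReturn (hret : IsCompleteFirstReturn w v)
    (hlt : v.length < w.length) (hv : Privileged v) (hu : Privileged u)
    (ih : ∀ x : List A, x.length < w.length → Privileged x →
      ∀ y : List A, Privileged y → (y <+: x ↔ y <:+ x))
    (hpre : u <+: w) : u <:+ w := by
  rcases List.prefix_or_prefix_of_prefix hpre hret.1 with huv | hvu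
  · exact ((ih v hlt hv u hu).1 huv).trans hret.2.1
  rcases hpre.length_le.lt_or_eq with hshort | heq
  · obtain ⟨p, rfl⟩ := (ih u hshort hu v hv).1 hvu
    obtain ⟨s, hs⟩ := hpre
    rcases hret.eq_nil_or_eq_nil_of_append_eq hlt hs with rfl | rfl
    · simpa using hret.2.1
    · simp [← hs]
  · rw [hpre.eq_of_length heq]

theorem isPrefix_of_isSuffix_of_isCompleteFirstReturn (hret : IsCompleteFirstReturn w v)
    (hlt : v.length < w.length) (hv : Privileged v) (hu : Privileged u)
    (ih : ∀ x : List A, x.length < w.length → Privileged x →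
      ∀ y : List A, Privileged y → (y <+: x ↔ y <:+ x))
    (hsuf : u <:+ w) : u <+: w := by
  rcases List.suffix_or_suffix_of_suffix hsuf hret.2.1 with huv | hvu
  · exact ((ih v hlt hv u hu).2 huv).trans hret.1
  rcases hsuf.length_le.lt_or_eq with hshort | heq
  · obtain ⟨s, rfl⟩ := (ih u hshort hu v hv).2 hvu
    obtain ⟨p, hp⟩ := hsuf
    rcases hret.eq_nil_or_eq_nil_of_append_eq hlt (by simpa using hp) with rfl | rfl
    · simp [← hp]
    · simpa using hret.1
  · rw [hsuf.eq_of_length heq]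

end

theorem Privileged.isPrefix_iff_isSuffix {A : Type*} {w u : List A} (hw : Privileged w)
    (hu : Privileged u) : u <+: w ↔ u <:+ w := by
  cases hw with
  | nil => simp
  | single _ => simp [List.prefix_cons_iff, List.suffix_cons_iff, or_comm]
  | ret _ v _ hlt hv hret =>
    have ih : ∀ x : List A, x.length < w.length → Privileged x →
        ∀ y : List A, Privileged y → (y <+: x ↔ y <:+ x) :=
      fun x _ hx y hy => hx.isPrefix_iff_isSuffix hy
    exact ⟨isSuffix_of_isPrefix_of_isCompleteFirstReturn hret hlt hv hu ih,
      isPrefix_of_isSuffix_of_isCompleteFirstReturn hret hlt hv hu ih⟩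
termination_by w.length

/-- A privileged prefix of a privileged word is also a suffix of it, and
symmetrically, a privileged suffix of a privileged word is also a prefix of it. -/
theorem privileged_prefix_is_suffix {A : Type*} (w u : List A)
    (hw : Privileged w) (hu : Privileged u) :
    (u <+: w → u <:+ w) ∧ (u <:+ w → u <+: w) :=
  ⟨(hw.isPrefix_iff_isSuffix hu).mp, (hw.isPrefix_iff_isSuffix hu).mpr⟩
end

section
/- Let w be a privileged word of length at least 2 and let u be its longest proper privileged prefix. Then w is a complete first return to u; in other words, the longest proper privileged prefix of w is its longest proper privileged border. The same holds with 'prefix' replaced by 'suffix'. -/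
/-
Let `w` be a complete first return to a privileged `u₀`. By induction on length, a privileged
prefix of a privileged word is also a suffix of it (and symmetrically). So a privileged proper
prefix `u` of `w` longer than `u₀` would end with `u₀`, producing an occurrence of `u₀` in `w`
strictly between its occurrences as prefix and as suffix. Hence `u₀` is the longest privileged
proper prefix, and likewise the longest privileged proper suffix.
-/

section

variable {A : Type*}

theorem exists_occurrences_of_occCount_eq_two {u w : List A} (h : occCount u w = 2) :
    ∃ x y, x ≠ y ∧ ∀ i, (i + u.length ≤ w.length ∧ (w.drop i).take u.length = u) ↔
      i = x ∨ i = y := by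
  obtain ⟨x, y, hxy, hS⟩ := Set.ncard_eq_two.mp h
  refine ⟨x, y, hxy, fun i => ?_⟩
  simpa using Set.ext_iff.mp hS i

namespace IsCompleteFirstReturn

variable {w u x : List A}

theorem length_lt (h : IsCompleteFirstReturn w u) : u.length < w.length := by
  obtain ⟨i, j, hij, hocc⟩ := exists_occurrences_of_occCount_eq_two h.2.2
  have hi := ((hocc i).mpr (Or.inl rfl)).1
  have hj := ((hocc j).mpr (Or.inr rfl)).1
  have := h.1.length_le
  omega

theorem eq_zero_or_eq_of_occurrence (h : IsCompleteFirstReturn w u) {i : ℕ}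
    (hi : i + u.length ≤ w.length) (hocc : (w.drop i).take u.length = u) :
    i = 0 ∨ i = w.length - u.length := by
  obtain ⟨x, y, hxy, hocc_iff⟩ := exists_occurrences_of_occCount_eq_two h.2.2
  have hlt := h.length_lt
  have h₀ := (hocc_iff 0).mp ⟨by omega, (List.prefix_iff_eq_take.mp h.1).symm⟩
  have h₁ := (hocc_iff (w.length - u.length)).mp
    ⟨by omega, by rw [← List.suffix_iff_eq_drop.mp h.2.1, List.take_length]⟩
  have hᵢ := (hocc_iff i).mp ⟨hi, hocc⟩
  omega

theorem eq_of_prefix_of_suffix (h : IsCompleteFirstReturn w u) (hx : x <+: w) (hxw : x ≠ w)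
    (hux : u <:+ x) : x = u := by
  obtain ⟨s, rfl⟩ := hux
  obtain ⟨t, rfl⟩ := hx
  rcases h.eq_zero_or_eq_of_occurrence (i := s.length) (by simp) (by simp) with hs | hs
  · simp [List.length_eq_zero_iff.mp hs]
  · simp only [List.length_append] at hs
    simp [List.length_eq_zero_iff.mp (by omega : t.length = 0)] at hxw

theorem eq_of_suffix_of_prefix (h : IsCompleteFirstReturn w u) (hx : x <:+ w) (hxw : x ≠ w)
    (hux : u <+: x) : x = u := by
  obtain ⟨s, rfl⟩ := hux
  obtain ⟨t, rfl⟩ := hx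
  rcases h.eq_zero_or_eq_of_occurrence (i := t.length) (by simp) (by simp) with ht | ht
  · exact absurd (by simp [List.length_eq_zero_iff.mp ht]) hxw
  · simp only [List.length_append] at ht
    simp [List.length_eq_zero_iff.mp (by omega : s.length = 0)]

end IsCompleteFirstReturn

theorem Privileged.exists_isCompleteFirstReturn {w : List A} (hw : Privileged w)
    (hlen : 2 ≤ w.length) : ∃ u, Privileged u ∧ IsCompleteFirstReturn w u := by
  cases hw with
  | nil | single => simp at hlen
  | ret _ u₀ _ _ hu₀ hcfr => exact ⟨u₀, hu₀, hcfr⟩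

theorem Privileged.suffix_of_prefix {w u : List A} (hw : Privileged w) (hu : Privileged u)
    (h : u <+: w) : u <:+ w := by
  rcases eq_or_ne u w with rfl | huw
  · exact List.suffix_rfl
  have hlt : u.length < w.length := lt_of_le_of_ne h.length_le (mt h.eq_of_length huw)
  cases hw with
  | nil | single => simp_all [List.length_eq_zero_iff]
  | ret _ u₀ _ hu₀w hu₀ hcfr =>
    rcases le_total u.length u₀.length with hle | hle
    · have huu₀ := List.prefix_of_prefix_length_le h hcfr.1 hle
      exact (hu₀.suffix_of_prefix hu huu₀).trans hcfr.2.1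
    · have hu₀u := hu.suffix_of_prefix hu₀ (List.prefix_of_prefix_length_le hcfr.1 h hle)
      exact hcfr.eq_of_prefix_of_suffix h huw hu₀u ▸ hcfr.2.1
termination_by w.length

theorem Privileged.prefix_of_suffix {w u : List A} (hw : Privileged w) (hu : Privileged u)
    (h : u <:+ w) : u <+: w := by
  rcases eq_or_ne u w with rfl | huw
  · exact List.prefix_rfl
  have hlt : u.length < w.length := lt_of_le_of_ne h.length_le (mt h.eq_of_length huw)
  cases hw with
  | nil | single => simp_all [List.length_eq_zero_iff]
  | ret _ u₀ _ hu₀w hu₀ hcfr =>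
    rcases le_total u.length u₀.length with hle | hle
    · have huu₀ := List.suffix_of_suffix_length_le h hcfr.2.1 hle
      exact (hu₀.prefix_of_suffix hu huu₀).trans hcfr.1
    · have hu₀u := hu.prefix_of_suffix hu₀ (List.suffix_of_suffix_length_le hcfr.2.1 h hle)
      exact hcfr.eq_of_suffix_of_prefix h huw hu₀u ▸ hcfr.1
termination_by w.length

end

/-- If `w` is a privileged word of length at least 2 and `u` is its longest
proper privileged prefix (resp. suffix), then `w` is a complete first return to `u`;
in particular `u` is a border of `w`, indeed its longest proper privileged border. -/
theorem complete_return_to_longest_privileged_prefix {A : Type*} (w : List A)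
    (hw : Privileged w) (hlen : 2 ≤ w.length) :
    (∀ u : List A, Privileged u → u <+: w → u ≠ w →
      (∀ v : List A, Privileged v → v <+: w → v ≠ w → v.length ≤ u.length) →
      IsCompleteFirstReturn w u) ∧
    (∀ u : List A, Privileged u → u <:+ w → u ≠ w →
      (∀ v : List A, Privileged v → v <:+ w → v ≠ w → v.length ≤ u.length) →
      IsCompleteFirstReturn w u) := by
  obtain ⟨u₀, hu₀, hcfr⟩ := hw.exists_isCompleteFirstReturn hlen
  have hu₀w : u₀ ≠ w := fun h => (h ▸ hcfr.length_lt).false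
  refine ⟨fun u hu hpre hne hmax => ?_, fun u hu hsuf hne hmax => ?_⟩
  · have hu₀u : u₀ <+: u :=
      List.prefix_of_prefix_length_le hcfr.1 hpre (hmax u₀ hu₀ hcfr.1 hu₀w)
    rwa [hcfr.eq_of_prefix_of_suffix hpre hne (hu.suffix_of_prefix hu₀ hu₀u)]
  · have hu₀u : u₀ <:+ u :=
      List.suffix_of_suffix_length_le hcfr.2.1 hsuf (hmax u₀ hu₀ hcfr.2.1 hu₀w)
    rwa [hcfr.eq_of_suffix_of_prefix hsuf hne (hu.prefix_of_suffix hu₀ hu₀u)]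
end

section
/- A finite word w is rich if and only if the set of privileged factors of w equals the set of palindromic factors of w. -/
/-!
Appending a letter to a word creates at most one new palindromic factor and exactly one new
privileged factor, each a suffix of the extended word. Indeed, for palindromes as for privileged
words, a suffix with the property of a word with the property is a border, so of two new such
factors the shorter would already occur earlier. Hence a word `w` has exactly `|w| + 1` privileged
factors and at most `|w| + 1` palindromic ones, so equality of the two sets forces richness. For the
converse, in a rich word each new palindrome is privileged, because complete first returns to
palindromes in rich words are palindromes.
-/

section

variable {A : Type*}

def occurrences (u w : List A) : Set ℕ :=
  {i | i + u.length ≤ w.length ∧ (w.drop i).take u.length = u}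

theorem occCount_eq_ncard (u w : List A) : occCount u w = (occurrences u w).ncard := rfl

theorem occurrences_finite (u w : List A) : (occurrences u w).Finite :=
  (Set.finite_Iic w.length).subset fun i hi => by simp only [Set.mem_Iic]; have := hi.1; omega

theorem mem_occurrences_iff {u w : List A} {i : ℕ} :
    i ∈ occurrences u w ↔ ∃ s t, w = s ++ u ++ t ∧ s.length = i := by
  constructor
  · rintro ⟨hle, htake⟩
    refine ⟨w.take i, w.drop (i + u.length), ?_, by simp; omega⟩
    conv_lhs => rw [← List.take_append_drop i w, ← List.take_append_drop u.length (w.drop i)]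
    rw [htake, List.drop_drop, List.append_assoc]
  · rintro ⟨s, t, rfl, rfl⟩
    exact ⟨by simp, by rw [List.append_assoc, List.drop_left, List.take_left]⟩

theorem isCompleteFirstReturn_iff {r q : List A} :
    IsCompleteFirstReturn r q ↔ q <+: r ∧ q <:+ r ∧ q.length < r.length ∧
      ∀ s t, r = s ++ q ++ t → s = [] ∨ t = [] := by
  have zero_mem (hp : q <+: r) : 0 ∈ occurrences q r := by
    obtain ⟨t, rfl⟩ := hp
    exact mem_occurrences_iff.mpr ⟨[], t, rfl, rfl⟩
  have last_mem (hs : q <:+ r) : r.length - q.length ∈ occurrences q r := by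
    obtain ⟨s, rfl⟩ := hs
    exact mem_occurrences_iff.mpr ⟨s, [], by simp, by simp⟩
  constructor
  · rintro ⟨hp, hs, hcount⟩
    rw [occCount_eq_ncard] at hcount
    have hlt : q.length < r.length := by
      by_contra! hle
      have hsub : occurrences q r ⊆ {0} := fun i hi => by
        have := hi.1
        simp only [Set.mem_singleton_iff]; omega
      have := Set.ncard_le_ncard hsub (Set.toFinite _)
      simp_all
    have hpair : ({0, r.length - q.length} : Set ℕ) = occurrences q r := by
      refine Set.eq_of_subset_of_ncard_le (Set.pair_subset (zero_mem hp) (last_mem hs)) ?_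
        (occurrences_finite q r)
      rw [hcount, Set.ncard_pair (by omega)]
    refine ⟨hp, hs, hlt, fun s t hr => ?_⟩
    have hmem : s.length ∈ occurrences q r := mem_occurrences_iff.mpr ⟨s, t, hr, rfl⟩
    rw [← hpair] at hmem
    have hlen : r.length = s.length + q.length + t.length := by simp [hr, Nat.add_assoc]
    rcases hmem with h | h
    · exact Or.inl (List.length_eq_zero_iff.mp h)
    · exact Or.inr (List.length_eq_zero_iff.mp (by simp at h; omega))
  · rintro ⟨hp, hs, hlt, hsplit⟩
    refine ⟨hp, hs, ?_⟩
    have hpair : occurrences q r = {0, r.length - q.length} := by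
      refine Set.Subset.antisymm (fun i hi => ?_) (Set.pair_subset (zero_mem hp) (last_mem hs))
      obtain ⟨s, t, hr, rfl⟩ := mem_occurrences_iff.mp hi
      have hlen : r.length = s.length + q.length + t.length := by simp [hr, Nat.add_assoc]
      rcases hsplit s t hr with rfl | rfl
      · exact Or.inl rfl
      · exact Or.inr (by simp at hlen ⊢; omega)
    rw [occCount_eq_ncard, hpair, Set.ncard_pair (by omega)]

theorem IsCompleteFirstReturn.length_lt_s3 {r q : List A} (h : IsCompleteFirstReturn r q) :
    q.length < r.length :=
  (isCompleteFirstReturn_iff.mp h).2.2.1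

theorem IsCompleteFirstReturn.eq_nil_or_eq_nil {r q s t : List A} (h : IsCompleteFirstReturn r q)
    (hr : r = s ++ q ++ t) : s = [] ∨ t = [] :=
  (isCompleteFirstReturn_iff.mp h).2.2.2 s t hr

theorem IsCompleteFirstReturn.reverse {r q : List A} (h : IsCompleteFirstReturn r q) :
    IsCompleteFirstReturn r.reverse q.reverse := by
  obtain ⟨hp, hs, hlt, hsplit⟩ := isCompleteFirstReturn_iff.mp h
  refine isCompleteFirstReturn_iff.mpr ⟨List.reverse_prefix.mpr hs, List.reverse_suffix.mpr hp,
    by simpa using hlt, fun s t hr => ?_⟩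
  have : r = t.reverse ++ q ++ s.reverse := by
    simpa using congrArg List.reverse hr
  simpa [or_comm] using hsplit _ _ this

theorem exists_isSuffix_isCompleteFirstReturn {u v : List A} (hp : u <+: v) (hs : u <:+ v)
    (hlt : u.length < v.length) : ∃ r, r <:+ v ∧ IsCompleteFirstReturn r u := by
  by_cases hsplit : ∀ s t, v = s ++ u ++ t → s = [] ∨ t = []
  · exact ⟨v, List.suffix_refl v, isCompleteFirstReturn_iff.mpr ⟨hp, hs, hlt, hsplit⟩⟩
  simp only [not_forall, not_or] at hsplit
  obtain ⟨s, t, hv, hs0, ht0⟩ := hsplit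
  have hlen : v.length = s.length + u.length + t.length := by simp [hv, Nat.add_assoc]
  have hs' : s.length ≠ 0 := by simpa using hs0
  have ht' : t.length ≠ 0 := by simpa using ht0
  have hut : u ++ t <:+ v := ⟨s, by simp [hv]⟩
  obtain ⟨r, hr, hru⟩ := exists_isSuffix_isCompleteFirstReturn (List.prefix_append u t)
    (List.suffix_of_suffix_length_le hs hut (by simp)) (by simp; omega)
  exact ⟨r, hr.trans hut, hru⟩
termination_by v.length
decreasing_by simp; omega

theorem exists_isPrefix_isCompleteFirstReturn {u v : List A} (hp : u <+: v) (hs : u <:+ v)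
    (hlt : u.length < v.length) : ∃ r, r <+: v ∧ IsCompleteFirstReturn r u := by
  obtain ⟨r, hr, hru⟩ := exists_isSuffix_isCompleteFirstReturn (List.reverse_prefix.mpr hs)
    (List.reverse_suffix.mpr hp) (by simpa using hlt)
  exact ⟨r.reverse, by simpa using List.reverse_prefix.mpr hr, by simpa using hru.reverse⟩

theorem Privileged.isPrefix_of_isSuffix {x y : List A} (hy : Privileged y) (hx : Privileged x)
    (hxy : x <:+ y) : x <+: y := by
  rcases le_or_gt y.length x.length with hle | hlen
  · rw [hxy.eq_of_length_le hle]
  cases hy with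
  | nil => simp at hlen
  | single a => simp_all
  | ret _ t _ _ ht hyt =>
    obtain ⟨htp, hts, htlt, hsplit⟩ := isCompleteFirstReturn_iff.mp hyt
    rcases le_or_gt x.length t.length with hxt | htx
    · exact (ht.isPrefix_of_isSuffix hx (List.suffix_of_suffix_length_le hxy hts hxt)).trans htp
    · -- `y = s ++ t ++ x'` would exhibit an interior occurrence of `t`
      obtain ⟨x', rfl⟩ :=
        hx.isPrefix_of_isSuffix ht (List.suffix_of_suffix_length_le hts hxy htx.le)
      obtain ⟨s, rfl⟩ := hxy
      rcases hsplit s x' (by simp) with rfl | rfl <;> simp at hlen htx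
termination_by y.length

theorem isInfix_of_isPrefix_of_isSuffix {x y w : List A} {a : A} (hxy : x <+: y)
    (hy : y <:+ w ++ [a]) (hlt : x.length < y.length) : x <:+: w := by
  obtain ⟨t, rfl⟩ := hxy
  obtain ⟨s, hs⟩ := hy
  rcases List.eq_nil_or_concat' t with rfl | ⟨t, b, rfl⟩
  · simp at hlt
  refine ⟨s, t, List.append_inj_left' (s₂ := w) (t₁ := [b]) (t₂ := [a]) ?_ rfl⟩
  simpa using hs

theorem isSuffix_of_isInfix_append_singleton {u w : List A} {a : A} (h : u <:+: w ++ [a])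
    (hnot : ¬ u <:+: w) : u <:+ w ++ [a] := by
  obtain ⟨s, t, hst⟩ := h
  rcases eq_or_ne t [] with rfl | ht
  · exact ⟨s, by simpa using hst⟩
  refine absurd (isInfix_of_isPrefix_of_isSuffix (a := a) (List.prefix_append u t) ⟨s, ?_⟩ ?_)
    hnot
  · simpa using hst
  · simpa [List.length_pos_iff] using ht

def factorsWith (P : List A → Prop) (w : List A) : Set (List A) :=
  {u | u <:+: w ∧ P u}

theorem factorsWith_finite (P : List A → Prop) (w : List A) : (factorsWith P w).Finite :=
  (List.finite_toSet w.sublists).subset fun _ hu => List.mem_sublists.mpr hu.1.sublist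

theorem factorsWith_nil {P : List A → Prop} (hP : P []) : factorsWith P [] = {[]} := by
  ext u
  simp only [factorsWith, List.infix_nil, Set.mem_ofPred_eq, Set.mem_singleton_iff]
  exact ⟨And.left, fun hu => ⟨hu, hu ▸ hP⟩⟩

theorem factorsWith_subset_append_singleton (P : List A → Prop) (w : List A) (a : A) :
    factorsWith P w ⊆ factorsWith P (w ++ [a]) :=
  fun _ hu => ⟨hu.1.trans (List.prefix_append w [a]).isInfix, hu.2⟩

def SuffixesArePrefixes (P : List A → Prop) : Prop :=
  ∀ ⦃x y⦄, P x → P y → x <:+ y → x <+: y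

theorem isSuffix_of_mem_factorsWith_diff {P : List A → Prop} (hP : SuffixesArePrefixes P)
    {w : List A} {a : A} {Q s : List A} (hQ : Q ∈ factorsWith P (w ++ [a]) \ factorsWith P w)
    (hs : P s) (hsuf : s <:+ w ++ [a]) :
    s <:+ Q := by
  obtain ⟨⟨hQinf, hPQ⟩, hQnew⟩ := hQ
  have hQnot : ¬ Q <:+: w := fun h => hQnew ⟨h, hPQ⟩
  have hQsuf := isSuffix_of_isInfix_append_singleton hQinf hQnot
  rcases le_or_gt s.length Q.length with hle | hlt
  · exact List.suffix_of_suffix_length_le hsuf hQsuf hle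
  · exact absurd (isInfix_of_isPrefix_of_isSuffix
      (hP hPQ hs (List.suffix_of_suffix_length_le hQsuf hsuf hlt.le)) hsuf hlt) hQnot

theorem factorsWith_append_singleton_eq_insert {P : List A → Prop} (hP : SuffixesArePrefixes P)
    {w : List A} {a : A} {Q : List A}
    (hQ : Q ∈ factorsWith P (w ++ [a]) \ factorsWith P w) :
    factorsWith P (w ++ [a]) = insert Q (factorsWith P w) := by
  refine Set.Subset.antisymm (fun u hu => ?_)
    (Set.insert_subset hQ.1 (factorsWith_subset_append_singleton P w a))
  by_contra hnot
  simp only [Set.mem_insert_iff, not_or] at hnot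
  have hu' : u ∈ factorsWith P (w ++ [a]) \ factorsWith P w := ⟨hu, hnot.2⟩
  have huQ := isSuffix_of_mem_factorsWith_diff hP hQ hu'.1.2
    (isSuffix_of_isInfix_append_singleton hu.1 fun h => hnot.2 ⟨h, hu.2⟩)
  have hQu := isSuffix_of_mem_factorsWith_diff hP hu' hQ.1.2
    (isSuffix_of_isInfix_append_singleton hQ.1.1 fun h => hQ.2 ⟨h, hQ.1.2⟩)
  exact hnot.1 (huQ.eq_of_length (le_antisymm huQ.length_le hQu.length_le))

theorem ncard_factorsWith_append_singleton_le {P : List A → Prop} (hP : SuffixesArePrefixes P)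
    (w : List A) (a : A) :
    (factorsWith P (w ++ [a])).ncard ≤ (factorsWith P w).ncard + 1 := by
  by_cases hnew : (factorsWith P (w ++ [a]) \ factorsWith P w).Nonempty
  · obtain ⟨Q, hQ⟩ := hnew
    rw [factorsWith_append_singleton_eq_insert hP hQ]
    exact Set.ncard_insert_le _ _
  · rw [Set.not_nonempty_iff_eq_empty, Set.sdiff_eq_empty] at hnew
    exact (Set.ncard_le_ncard hnew (factorsWith_finite P w)).trans (Nat.le_succ _)

theorem ncard_factorsWith_le {P : List A → Prop} (hP : SuffixesArePrefixes P) (w : List A) :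
    (factorsWith P w).ncard ≤ w.length + 1 := by
  induction w using List.reverseRecOn with
  | nil =>
    calc (factorsWith P []).ncard ≤ ({[]} : Set (List A)).ncard :=
          Set.ncard_le_ncard (fun _ hu => List.infix_nil.mp hu.1) (Set.toFinite _)
      _ = _ := by simp
  | append_singleton w a ih =>
    have := ncard_factorsWith_append_singleton_le hP w a
    simp only [List.length_append, List.length_singleton]
    omega

theorem suffixesArePrefixes_reverse_eq : SuffixesArePrefixes fun u : List A => u.reverse = u :=
  fun x y hx hy hxy => by simpa [hx, hy] using List.reverse_prefix.mpr hxy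

theorem suffixesArePrefixes_privileged : SuffixesArePrefixes (Privileged (A := A)) :=
  fun _ _ hx hy hxy => hy.isPrefix_of_isSuffix hx hxy

/-- The longest privileged suffix of `w ++ [a]` is a new factor: were it a factor of `w`, the
complete first return to it ending at the last letter would be a longer privileged suffix. -/
theorem exists_mem_factorsWith_privileged_diff (w : List A) (a : A) :
    (factorsWith Privileged (w ++ [a]) \ factorsWith Privileged w).Nonempty := by
  obtain ⟨u, ⟨husuf, hupriv⟩, humax⟩ := Set.exists_max_image
    {u | u <:+ w ++ [a] ∧ Privileged u} List.length
    ((List.finite_toSet (w ++ [a]).tails).subset fun _ hu => (List.mem_tails _ _).mpr hu.1)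
    ⟨[a], List.suffix_append w [a], Privileged.single a⟩
  refine ⟨u, ⟨husuf.isInfix, hupriv⟩, fun ⟨⟨s, t, hw⟩, _⟩ => ?_⟩
  have hone : 1 ≤ u.length := humax [a] ⟨List.suffix_append w [a], Privileged.single a⟩
  have hv : u ++ (t ++ [a]) <:+ w ++ [a] := ⟨s, by simp [← hw]⟩
  obtain ⟨r, hr, hru⟩ := exists_isSuffix_isCompleteFirstReturn (List.prefix_append u _)
    (List.suffix_of_suffix_length_le husuf hv (by simp)) (by simp)
  have hrpriv : Privileged r := .ret r u (by have := hru.length_lt_s3; omega) hru.length_lt_s3 hupriv hru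
  have := humax r ⟨hr.trans hv, hrpriv⟩
  have := hru.length_lt_s3
  omega

theorem ncard_factorsWith_privileged (w : List A) :
    (factorsWith Privileged w).ncard = w.length + 1 := by
  induction w using List.reverseRecOn with
  | nil => simp [factorsWith_nil Privileged.nil]
  | append_singleton w a ih =>
    obtain ⟨Q, hQ⟩ := exists_mem_factorsWith_privileged_diff w a
    rw [factorsWith_append_singleton_eq_insert suffixesArePrefixes_privileged hQ,
      Set.ncard_insert_of_notMem hQ.2 (factorsWith_finite _ _), ih]
    simp

theorem richWord_iff_ncard (w : List A) :
    RichWord w ↔ (factorsWith (fun u => u.reverse = u) w).ncard = w.length + 1 :=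
  Iff.rfl

theorem RichWord.of_append_singleton {w : List A} {a : A} (h : RichWord (w ++ [a])) :
    RichWord w ∧
      (factorsWith (fun u => u.reverse = u) (w ++ [a]) \
        factorsWith (fun u => u.reverse = u) w).Nonempty := by
  rw [richWord_iff_ncard] at h ⊢
  have hstep := ncard_factorsWith_append_singleton_le suffixesArePrefixes_reverse_eq w a
  have hle := ncard_factorsWith_le suffixesArePrefixes_reverse_eq w
  simp only [List.length_append, List.length_singleton] at h
  refine ⟨by omega, Set.nonempty_of_ncard_ne_zero fun h0 => ?_⟩
  have := Set.ncard_sdiff_add_ncard_of_subset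
    (factorsWith_subset_append_singleton (fun u => u.reverse = u) w a) (factorsWith_finite _ _)
  omega

/-- Due to Glen, Justin, Widmer and Zamboni. -/
theorem RichWord.reverse_eq_of_isCompleteFirstReturn {p r q : List A} (hp : RichWord p)
    (hq : q.reverse = q) (hrq : IsCompleteFirstReturn r q) (hr : r <:+: p) : r.reverse = r := by
  induction p using List.reverseRecOn generalizing r with
  | nil => simp [List.infix_nil.mp hr]
  | append_singleton p b ih =>
    obtain ⟨hp', Q, hQ⟩ := hp.of_append_singleton
    by_cases hrp : r <:+: p
    · exact ih hp' hrq hrp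
    have hrsuf := isSuffix_of_isInfix_append_singleton hr hrp
    have hQsuf : Q <:+ p ++ [b] := isSuffix_of_isInfix_append_singleton hQ.1.1
      fun h => hQ.2 ⟨h, hQ.1.2⟩
    have hqQ : q <:+ Q := isSuffix_of_mem_factorsWith_diff suffixesArePrefixes_reverse_eq hQ hq
      ((isCompleteFirstReturn_iff.mp hrq).2.1.trans hrsuf)
    rcases le_or_gt Q.length r.length with hQr | hrQ
    · -- `r = s ++ q ++ t` with `Q = q ++ t`: either `Q = r`, or `Q = q` is a proper prefix of `r`
      obtain ⟨s, hs⟩ := List.suffix_of_suffix_length_le hQsuf hrsuf hQr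
      obtain ⟨t, ht⟩ := suffixesArePrefixes_reverse_eq hq hQ.1.2 hqQ
      rcases hrq.eq_nil_or_eq_nil (s := s) (t := t) (by rw [← hs, ← ht, List.append_assoc])
        with rfl | rfl
      · simpa [← hs] using hQ.1.2
      · rw [List.append_nil] at ht
        subst ht
        exact absurd ⟨isInfix_of_isPrefix_of_isSuffix (isCompleteFirstReturn_iff.mp hrq).1
          hrsuf hrq.length_lt_s3, hq⟩ hQ.2
    · -- `r` is a proper suffix of `Q`, so its mirror image occurs earlier
      have hrev : r.reverse <+: Q := by
        simpa [hQ.1.2] using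
          List.reverse_prefix.mpr (List.suffix_of_suffix_length_le hrsuf hQsuf hrQ.le)
      have := ih hp' (by simpa [hq] using hrq.reverse)
        (isInfix_of_isPrefix_of_isSuffix hrev hQsuf (by simpa using hrQ))
      simpa using this.symm

/-- The longest proper palindromic suffix `q` of `Q` is privileged, being a palindromic factor
of `w`, and `Q` is a complete first return to `q`: an interior occurrence of `q` would yield a
complete first return to `q` that is a prefix of `Q`, hence a palindrome, hence a longer proper
palindromic suffix of `Q`. -/
theorem RichWord.privileged_of_mem_factorsWith_diff {w : List A} {a : A} {Q : List A}
    (h : RichWord (w ++ [a]))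
    (hw : factorsWith Privileged w = factorsWith (fun u => u.reverse = u) w)
    (hQ : Q ∈ factorsWith (fun u => u.reverse = u) (w ++ [a]) \
      factorsWith (fun u => u.reverse = u) w) :
    Privileged Q := by
  obtain ⟨⟨hQinf, hQpal⟩, hQnew⟩ := hQ
  have hQsuf := isSuffix_of_isInfix_append_singleton hQinf fun h => hQnew ⟨h, hQpal⟩
  rcases Nat.lt_or_ge Q.length 2 with hQ1 | hQ2
  · obtain ⟨b, rfl⟩ : ∃ b, Q = [b] := by
      refine List.length_eq_one_iff.mp (le_antisymm (by omega) (List.length_pos_iff.mpr ?_))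
      rintro rfl
      exact hQnew ⟨List.nil_infix, rfl⟩
    exact .single b
  obtain ⟨q, ⟨hqQ, hqpal, hqlt⟩, hqmax⟩ := Set.exists_max_image
    {q | q <:+ Q ∧ q.reverse = q ∧ q.length < Q.length} List.length
    ((List.finite_toSet Q.tails).subset fun _ hq => (List.mem_tails _ _).mpr hq.1)
    ⟨[], List.nil_suffix, rfl, by simp; omega⟩
  have hqpre : q <+: Q := suffixesArePrefixes_reverse_eq hqpal hQpal hqQ
  have hqpriv : Privileged q := by
    have hqw : q ∈ factorsWith (fun u => u.reverse = u) w :=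
      ⟨isInfix_of_isPrefix_of_isSuffix hqpre hQsuf hqlt, hqpal⟩
    exact (hw ▸ hqw).2
  refine .ret Q q hQ2 hqlt hqpriv
    (isCompleteFirstReturn_iff.mpr ⟨hqpre, hqQ, hqlt, fun s t hst => ?_⟩)
  by_contra! hst0
  have hsq : s ++ q <+: Q := ⟨t, hst.symm⟩
  obtain ⟨r, hr, hrq⟩ := exists_isPrefix_isCompleteFirstReturn
    (List.prefix_of_prefix_length_le hqpre hsq (by simp)) (List.suffix_append s q)
    (by simpa [List.length_pos_iff] using hst0.1)
  have hrQ : r <+: Q := hr.trans hsq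
  have hrpal := h.reverse_eq_of_isCompleteFirstReturn hqpal hrq (hrQ.isInfix.trans hQinf)
  have hrQsuf : r <:+ Q := by simpa [hrpal, hQpal] using List.reverse_suffix.mpr hrQ
  have hlen : Q.length = s.length + q.length + t.length := by simp [hst, Nat.add_assoc]
  have ht : 0 < t.length := List.length_pos_iff.mpr hst0.2
  have hrs : r.length ≤ s.length + q.length := by simpa using hr.length_le
  have := hqmax r ⟨hrQsuf, hrpal, by omega⟩
  have := hrq.length_lt_s3
  omega

end

/-- A finite word is rich if and only if its set of privileged factors
equals its set of palindromic factors. -/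
theorem rich_iff_privileged_eq_palindromic {A : Type*} (w : List A) :
    RichWord w ↔
      {u : List A | u <:+: w ∧ Privileged u} =
        {u : List A | u <:+: w ∧ u.reverse = u} := by
  change RichWord w ↔ factorsWith Privileged w = factorsWith (fun u => u.reverse = u) w
  refine ⟨fun h => ?_, fun h => by rw [richWord_iff_ncard, ← h, ncard_factorsWith_privileged]⟩
  induction w using List.reverseRecOn with
  | nil =>
    rw [factorsWith_nil Privileged.nil, factorsWith_nil (P := fun u : List A => u.reverse = u) rfl]
  | append_singleton w a ih =>
    obtain ⟨hw, Q, hQ⟩ := h.of_append_singleton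
    have hPw := ih hw
    have hQpriv := h.privileged_of_mem_factorsWith_diff hPw hQ
    rw [factorsWith_append_singleton_eq_insert suffixesArePrefixes_reverse_eq hQ,
      factorsWith_append_singleton_eq_insert suffixesArePrefixes_privileged
        ⟨⟨hQ.1.1, hQpriv⟩, fun hQw => hQ.2 (hPw ▸ hQw)⟩, hPw]
end

section
/- Let Q be a Q-property and let w be a nonempty finite word in which at least two distinct letters occur. Then there exists an integer n with 2 ≤ n ≤ |w| such that w has no factor of length n having property Q, i.e. H^Q_n(w) = 0. -/
namespace List

variable {A : Type*}

theorem finite_setOf_infix (w : List A) : {u : List A | u <:+: w}.Finite :=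
  w.sublists.finite_toSet.subset fun _ hu => by simpa using hu.sublist

theorem take_add_length_of_infix {u w : List A} (h : u <:+: w) :
    ∃ s, s.length + u.length ≤ w.length ∧ w.take (s.length + u.length) = s ++ u := by
  obtain ⟨s, t, rfl⟩ := h
  exact ⟨s, by simp, by rw [← List.length_append, List.take_left]⟩

theorem suffix_take_add_length {u w : List A} {j : ℕ} (h : (w.drop j).take u.length = u) :
    u <:+ w.take (j + u.length) := by
  rw [take_add, h]
  exact suffix_append _ _

end List

section FirstOccurrence

variable {A : Type*}

/-- The (1-based) position at which the first occurrence of `u` in `w` ends;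
meaningful only when `u <:+: w` (otherwise `sInf ∅ = 0`). -/
noncomputable def firstOccEnd (u w : List A) : ℕ := sInf {i | u <:+ w.take i}

variable {u w : List A}

theorem suffix_take_firstOccEnd (h : u <:+: w) : u <:+ w.take (firstOccEnd u w) := by
  obtain ⟨s, -, hs⟩ := List.take_add_length_of_infix h
  exact Nat.sInf_mem (s := {i | u <:+ w.take i})
    ⟨_, show u <:+ w.take _ by rw [hs]; exact List.suffix_append s u⟩

theorem firstOccEnd_le {i : ℕ} (h : u <:+ w.take i) : firstOccEnd u w ≤ i := Nat.sInf_le h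

theorem firstOccEnd_le_length (h : u <:+: w) : firstOccEnd u w ≤ w.length := by
  obtain ⟨s, hlen, hs⟩ := List.take_add_length_of_infix h
  exact (firstOccEnd_le (by rw [hs]; exact List.suffix_append s u)).trans hlen

theorem occCount_take_firstOccEnd (h : u <:+: w) :
    occCount u (w.take (firstOccEnd u w)) = 1 := by
  set i := firstOccEnd u w
  have hi : u <:+ w.take i := suffix_take_firstOccEnd h
  have hlen : (w.take i).length = i := by
    rw [List.length_take, min_eq_left (firstOccEnd_le_length h)]
  suffices {j | j + u.length ≤ (w.take i).length ∧ ((w.take i).drop j).take u.length = u} =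
      {i - u.length} by rw [occCount, this, Set.ncard_singleton]
  ext j
  simp only [Set.mem_ofPred_eq, Set.mem_singleton_iff, hlen]
  constructor
  · rintro ⟨hj, hocc⟩
    rw [List.drop_take, List.take_take, min_eq_left (by omega)] at hocc
    have := firstOccEnd_le (List.suffix_take_add_length hocc)
    omega
  · rintro rfl
    obtain ⟨s, hs⟩ := hi
    have hsu : s.length + u.length = i := by simpa [hlen] using congrArg List.length hs
    have hslen : s.length = i - u.length := by omega
    refine ⟨by omega, ?_⟩
    rw [← hs, ← hslen, List.drop_left, List.take_length]

theorem introduces_firstOccEnd (hu : u ≠ []) (h : u <:+: w) :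
    Introduces w (firstOccEnd u w) u := by
  have hi := suffix_take_firstOccEnd h
  refine ⟨Nat.one_le_iff_ne_zero.mpr fun h0 => hu ?_, firstOccEnd_le_length h, hi,
    occCount_take_firstOccEnd h⟩
  rwa [h0, List.take_zero, List.suffix_nil] at hi

end FirstOccurrence

theorem IsQProperty.ncard_le_length {A : Type*} {Q : List A → Prop} (hQ : IsQProperty Q)
    (w : List A) : {u | u ≠ [] ∧ u <:+: w ∧ Q u}.ncard ≤ w.length := by
  have hmaps : ∀ u ∈ {u | u ≠ [] ∧ u <:+: w ∧ Q u}, firstOccEnd u w ∈ Set.Icc 1 w.length :=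
    fun u ⟨hu, h, _⟩ => ⟨(introduces_firstOccEnd hu h).1, firstOccEnd_le_length h⟩
  have hinj : Set.InjOn (firstOccEnd · w) {u | u ≠ [] ∧ u <:+: w ∧ Q u} := by
    rintro u ⟨hu, hfu, hQu⟩ v ⟨hv, hfv, hQv⟩ (he : firstOccEnd u w = firstOccEnd v w)
    exact hQ.introduces_at_most_one w _ u v (introduces_firstOccEnd hu hfu)
      (he ▸ introduces_firstOccEnd hv hfv) hQu hQv
  simpa using Set.ncard_le_ncard_of_injOn _ hmaps hinj (Set.finite_Icc 1 w.length)

theorem add_one_le_ncard_of_two_letters_and_lengths {A : Type*} {T : Set (List A)}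
    (hT : T.Finite) {a b : A} (hab : a ≠ b) (ha : [a] ∈ T) (hb : [b] ∈ T) {N : ℕ}
    (hlong : ∀ n, 2 ≤ n → n ≤ N → ∃ u ∈ T, u.length = n) : N + 1 ≤ T.ncard := by
  -- after removing `[a]`, the letter `[b]` still provides length `1`
  have hsub : Set.Icc 1 N ⊆ List.length '' (T \ {[a]}) := by
    rintro n ⟨h1, hN⟩
    obtain rfl | h2 := eq_or_lt_of_le h1
    · exact ⟨[b], ⟨hb, by simpa using hab.symm⟩, rfl⟩
    · obtain ⟨u, hu, rfl⟩ := hlong n h2 hN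
      exact ⟨u, ⟨hu, fun h => by simp [Set.mem_singleton_iff.mp h] at h2⟩, rfl⟩
  have := (Set.ncard_le_ncard hsub (hT.sdiff.image _)).trans (Set.ncard_image_le hT.sdiff)
  have := Set.ncard_sdiff_singleton_add_one ha hT
  have := Set.ncard_Icc_nat 1 N
  omega

theorem q_complexity_vanishes_general {A : Type*} (Q : List A → Prop) (hQ : IsQProperty Q)
    (w : List A) (hab : ∃ a b : A, a ∈ w ∧ b ∈ w ∧ a ≠ b) :
    ∃ n : ℕ, 2 ≤ n ∧ n ≤ w.length ∧
      Set.ncard {u : List A | u <:+: w ∧ Q u ∧ u.length = n} = 0 := by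
  obtain ⟨a, b, ha, hb, hne⟩ := hab
  by_contra! hall
  set T := {u | u ≠ [] ∧ u <:+: w ∧ Q u}
  have hletter : ∀ c ∈ w, [c] ∈ T := fun c hc =>
    ⟨List.cons_ne_nil c [], (List.singleton_infix_iff c w).mpr hc, hQ.q_single c⟩
  have hlong : ∀ n, 2 ≤ n → n ≤ w.length → ∃ u ∈ T, u.length = n :=
    fun n h2 hn => by
      obtain ⟨u, hfac, hQu, rfl⟩ := Set.nonempty_of_ncard_ne_zero (hall n h2 hn)
      exact ⟨u, ⟨List.ne_nil_of_length_pos (by omega), hfac, hQu⟩, rfl⟩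
  have hlower : w.length + 1 ≤ T.ncard := add_one_le_ncard_of_two_letters_and_lengths
    (w.finite_setOf_infix.subset fun _ hu => hu.2.1) hne (hletter a ha) (hletter b hb) hlong
  have hupper : T.ncard ≤ w.length := hQ.ncard_le_length w
  omega

/-- If `Q` is a Q-property and `w` is a nonempty finite word containing at
least two distinct letters, then `H^Q_n(w) = 0` for some `n` with `2 ≤ n ≤ |w|`. -/
theorem q_complexity_vanishes {A : Type*} (Q : List A → Prop) (hQ : IsQProperty Q)
    (w : List A) (hw : w ≠ []) (hab : ∃ a b : A, a ∈ w ∧ b ∈ w ∧ a ≠ b) :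
    ∃ n : ℕ, 2 ≤ n ∧ n ≤ w.length ∧
      Set.ncard {u : List A | u <:+: w ∧ Q u ∧ u.length = n} = 0 :=
  q_complexity_vanishes_general Q hQ w hab
end

section
/- Let Q be a Q-property and let w = y^ω be a periodic infinite word, where y is a nonempty finite word. Then either H^Q_n(w) = 0 for infinitely many n, or there exists k such that H^Q_n(w) = 1 for all n ≥ k. -/
/-!
If `u` is a nonempty factor of `w` with property `Q`, the position where its first occurrence
ends introduces `u` in the prefix of `w` read so far, so distinct such factors have distinct
first ends. In `w = y^ω` every factor occurs first before position `|y|`, hence the `Q`-factors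
with lengths in `[N, M]` have their first ends in `[N, M + |y|)`. If `H^Q_n(w) ≥ 1` for all
`n ≥ N`, this leaves room for at most `|y| - 1` lengths with two or more `Q`-factors.
-/

namespace InfiniteWord

variable {A : Type*} {w : ℕ → A} {u : List A}

def infPrefix (w : ℕ → A) (n : ℕ) : List A := (List.range n).map w

def infFactor (w : ℕ → A) (i n : ℕ) : List A := (List.range n).map fun k => w (i + k)

def occurrences (w : ℕ → A) (u : List A) : Set ℕ := {i | u = infFactor w i u.length}

/-- When `u` is not a factor of `w`, `sInf ∅ = 0` makes this `u.length`. -/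
noncomputable def firstEnd (w : ℕ → A) (u : List A) : ℕ := sInf (occurrences w u) + u.length

@[simp]
theorem length_infPrefix (w : ℕ → A) (n : ℕ) : (infPrefix w n).length = n := by
  simp [infPrefix]

theorem drop_take_infPrefix {i m n : ℕ} (h : i + m ≤ n) :
    ((infPrefix w n).drop i).take m = infFactor w i m := by
  apply List.ext_getElem
  · simp only [List.length_take, List.length_drop, length_infPrefix, infFactor, List.length_map,
      List.length_range]
    omega
  · intro k _ _
    simp only [List.getElem_take, List.getElem_drop, infPrefix, infFactor, List.getElem_map,
      List.getElem_range]

theorem infFactor_isSuffix_infPrefix (w : ℕ → A) (i n : ℕ) :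
    infFactor w i n <:+ infPrefix w (i + n) :=
  ⟨infPrefix w i, by simp [infPrefix, infFactor, List.range_add, Function.comp_def]⟩

theorem occCount_infPrefix (w : ℕ → A) (u : List A) (n : ℕ) :
    occCount u (infPrefix w n) = {i ∈ occurrences w u | i + u.length ≤ n}.ncard := by
  unfold occCount occurrences
  congr 1
  ext i
  simp only [Set.mem_ofPred_eq, length_infPrefix]
  constructor
  · rintro ⟨hi, hu⟩
    exact ⟨(drop_take_infPrefix hi ▸ hu).symm, hi⟩
  · rintro ⟨hu, hi⟩
    exact ⟨hi, (drop_take_infPrefix hi).trans hu.symm⟩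

theorem introduces_infPrefix_firstEnd (hu : IsFactorInf w u) (hne : u ≠ []) :
    Introduces (infPrefix w (firstEnd w u)) (firstEnd w u) u := by
  have hmem : u = infFactor w (sInf (occurrences w u)) u.length := Nat.sInf_mem hu
  have hfull : (infPrefix w (firstEnd w u)).take (firstEnd w u) = infPrefix w (firstEnd w u) :=
    List.take_of_length_le (length_infPrefix w _).le
  have hlen : 0 < u.length := List.length_pos_iff.mpr hne
  have honly : {i ∈ occurrences w u | i + u.length ≤ firstEnd w u} = {sInf (occurrences w u)} := by
    ext i
    simp only [Set.mem_ofPred_eq, Set.mem_singleton_iff, firstEnd]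
    refine ⟨fun ⟨hi, hle⟩ => le_antisymm (by omega) (Nat.sInf_le hi), ?_⟩
    rintro rfl
    exact ⟨hmem, le_rfl⟩
  refine ⟨by unfold firstEnd; omega, (length_infPrefix w _).ge, ?_, ?_⟩
  · rw [hfull]
    have h := infFactor_isSuffix_infPrefix w (sInf (occurrences w u)) u.length
    rwa [← hmem] at h
  · rw [hfull, occCount_infPrefix, honly, Set.ncard_singleton]

/-- Two nonempty `Q`-factors whose first occurrences end at the same place would both be
introduced by that position. -/
theorem injOn_firstEnd {Q : List A → Prop} (hQ : IsQProperty Q) :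
    Set.InjOn (firstEnd w) {u | IsFactorInf w u ∧ Q u ∧ u ≠ []} :=
  fun u ⟨hu, hQu, hu0⟩ v ⟨hv, hQv, hv0⟩ h =>
    hQ.introduces_at_most_one _ _ u v (introduces_infPrefix_firstEnd hu hu0)
      (h ▸ introduces_infPrefix_firstEnd hv hv0) hQu hQv

section Periodic

variable {p : ℕ}

theorem _root_.Function.Periodic.infFactor_mod (hper : Function.Periodic w p) (i n : ℕ) :
    infFactor w (i % p) n = infFactor w i n := by
  refine List.map_congr_left fun k _ => ?_
  rw [← hper.map_mod_nat (i % p + k), ← hper.map_mod_nat (i + k), Nat.mod_add_mod]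

theorem _root_.Function.Periodic.sInf_occurrences_lt (hper : Function.Periodic w p) (hp : 0 < p)
    (hu : IsFactorInf w u) : sInf (occurrences w u) < p := by
  obtain ⟨i, hi⟩ := hu
  have hmod : i % p ∈ occurrences w u := hi.trans (hper.infFactor_mod i u.length).symm
  exact (Nat.sInf_le hmod).trans_lt (Nat.mod_lt i hp)

theorem _root_.Function.Periodic.finite_factors_of_length (hper : Function.Periodic w p)
    (hp : 0 < p) (n : ℕ) : {u | IsFactorInf w u ∧ u.length = n}.Finite := by
  refine ((Set.finite_Iio p).image fun i => infFactor w i n).subset ?_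
  rintro u ⟨⟨i, hi⟩, rfl⟩
  exact ⟨i % p, Nat.mod_lt i hp, (hper.infFactor_mod i _).trans hi.symm⟩

/-- The nonempty `Q`-factors with lengths in `[N, M]` have pairwise distinct first ends, all
in `[N, M + p)`. -/
theorem _root_.Function.Periodic.sum_qComplexityInf_Icc_le (hper : Function.Periodic w p)
    (hp : 0 < p) {Q : List A → Prop} (hQ : IsQProperty Q) {N : ℕ} (hN : 1 ≤ N) (M : ℕ) :
    ∑ n ∈ Finset.Icc N M, qComplexityInf w Q n ≤ M + p - N := by
  set S : ℕ → Set (List A) := fun n => {u | IsFactorInf w u ∧ Q u ∧ u.length = n}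
  have hfin : ∀ n, (S n).Finite := fun n =>
    (hper.finite_factors_of_length hp n).subset fun u hu => ⟨hu.1, hu.2.2⟩
  have hdisj : (↑(Finset.Icc N M) : Set ℕ).PairwiseDisjoint S := fun m _ n _ hmn =>
    Set.disjoint_left.mpr fun u hum hun => hmn (hum.2.2.symm.trans hun.2.2)
  have hmaps : ∀ u ∈ ⋃ n ∈ (↑(Finset.Icc N M) : Set ℕ), S n,
      firstEnd w u ∈ (↑(Finset.Ico N (M + p)) : Set ℕ) := by
    simp only [Set.mem_iUnion, Finset.coe_Icc, Finset.coe_Ico, Set.mem_Icc, Set.mem_Ico]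
    rintro u ⟨n, ⟨hNn, hnM⟩, hu, -, rfl⟩
    have := hper.sInf_occurrences_lt hp hu
    unfold firstEnd
    omega
  have hinj : Set.InjOn (firstEnd w) (⋃ n ∈ (↑(Finset.Icc N M) : Set ℕ), S n) := by
    refine (injOn_firstEnd hQ).mono ?_
    simp only [Set.iUnion_subset_iff, Finset.coe_Icc, Set.mem_Icc]
    rintro n ⟨hNn, -⟩ u ⟨hu, hQu, rfl⟩
    exact ⟨hu, hQu, List.length_pos_iff.mp (by omega)⟩
  calc ∑ n ∈ Finset.Icc N M, qComplexityInf w Q n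
      = (⋃ n ∈ (↑(Finset.Icc N M) : Set ℕ), S n).ncard := by
        rw [(Finset.finite_toSet _).ncard_biUnion (fun n _ => hfin n) hdisj, finsum_mem_coe_finset]
        rfl
    _ ≤ (↑(Finset.Ico N (M + p)) : Set ℕ).ncard :=
        Set.ncard_le_ncard_of_injOn _ hmaps hinj (Finset.finite_toSet _)
    _ = M + p - N := by rw [Set.ncard_coe_finset, Nat.card_Ico]

end Periodic

end InfiniteWord

theorem Finset.card_add_card_filter_le_sum {ι : Type*} {s : Finset ι} {f : ι → ℕ}
    (hpos : ∀ i ∈ s, 1 ≤ f i) : s.card + (s.filter fun i => 2 ≤ f i).card ≤ ∑ i ∈ s, f i := by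
  rw [Finset.card_filter, Finset.card_eq_sum_ones, ← Finset.sum_add_distrib]
  exact Finset.sum_le_sum fun i hi => by
    have := hpos i hi
    split_ifs <;> omega

theorem Nat.eventually_eq_one_of_sum_Icc_le {f : ℕ → ℕ} {N C : ℕ} (hpos : ∀ n, N ≤ n → 1 ≤ f n)
    (hsum : ∀ M, ∑ n ∈ Finset.Icc N M, f n ≤ M + C - N) : ∃ k, ∀ n, k ≤ n → f n = 1 := by
  have hbig : ∀ M, ((Finset.Icc N M).filter fun n => 2 ≤ f n).card ≤ C := by
    intro M
    have hle := Finset.card_add_card_filter_le_sum (s := Finset.Icc N M) fun n hn =>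
      hpos n (Finset.mem_Icc.mp hn).1
    have hsub := Finset.card_le_card (Finset.filter_subset (fun n => 2 ≤ f n) (Finset.Icc N M))
    rw [Nat.card_Icc] at hle hsub
    have := hsum M
    omega
  have hfin : {n | N ≤ n ∧ 2 ≤ f n}.Finite := by
    by_contra hinf
    obtain ⟨t, hts, htcard⟩ := Set.Infinite.exists_subset_card_eq hinf (C + 1)
    have hsub : t ⊆ (Finset.Icc N (t.sup id)).filter fun n => 2 ≤ f n := fun n hn =>
      Finset.mem_filter.mpr
        ⟨Finset.mem_Icc.mpr ⟨(hts hn).1, Finset.le_sup (f := id) hn⟩, (hts hn).2⟩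
    have := (Finset.card_le_card hsub).trans (hbig _)
    omega
  obtain ⟨b, hb⟩ := hfin.bddAbove
  refine ⟨max (b + 1) N, fun n hn => ?_⟩
  have h1 := hpos n (le_of_max_le_right hn)
  have h2 : ¬ 2 ≤ f n := fun h2 => by
    have := hb ⟨le_of_max_le_right hn, h2⟩
    have := le_of_max_le_left hn
    omega
  omega

theorem q_complexity_of_periodic_general {A : Type*} (Q : List A → Prop)
    (hQ : IsQProperty Q) (y : List A) (hy : y ≠ []) (w : ℕ → A)
    (hw : ∀ n : ℕ, w n = y.getD (n % y.length) (w 0)) :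
    (∀ N : ℕ, ∃ n : ℕ, N ≤ n ∧ qComplexityInf w Q n = 0) ∨
    (∃ k : ℕ, ∀ n : ℕ, k ≤ n → qComplexityInf w Q n = 1) := by
  have hper : Function.Periodic w y.length := fun n => by rw [hw (n + _), hw n, Nat.add_mod_right]
  have hp : 0 < y.length := List.length_pos_iff.mpr hy
  refine or_iff_not_imp_left.mpr fun hzero => ?_
  push Not at hzero
  obtain ⟨N, hN⟩ := hzero
  exact Nat.eventually_eq_one_of_sum_Icc_le
    (fun n hn => Nat.one_le_iff_ne_zero.mpr (hN n (le_of_max_le_left hn)))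
    (hper.sum_qComplexityInf_Icc_le hp hQ (le_max_right N 1))

/-- For a Q-property `Q` and a periodic infinite word `w = y^ω` (over a
finite alphabet), either `H^Q_n(w) = 0` for infinitely many `n`, or there exists `k`
such that `H^Q_n(w) = 1` for all `n ≥ k`. -/
theorem q_complexity_of_periodic {A : Type*} [Fintype A] (Q : List A → Prop)
    (hQ : IsQProperty Q) (y : List A) (hy : y ≠ []) (w : ℕ → A)
    (hw : ∀ n : ℕ, w n = y.getD (n % y.length) (w 0)) :
    (∀ N : ℕ, ∃ n : ℕ, N ≤ n ∧ qComplexityInf w Q n = 0) ∨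
    (∃ k : ℕ, ∀ n : ℕ, k ≤ n → qComplexityInf w Q n = 1) :=
  q_complexity_of_periodic_general Q hQ y hy w hw
end

section
/- Let Q be a Q-property and let w be an ultimately periodic infinite word. Then either H^Q_n(w) = 0 for infinitely many n, or there exists k such that H^Q_n(w) = 1 for all n ≥ k. -/
/-!
Each position of a finite word introduces at most one `Q`-factor, and every nonempty factor is
introduced at the end of its first occurrence, so a word of length `m` has at most `m + 1`
distinct `Q`-factors. If `w` is periodic from `L` on with period `p`, every factor of `w` of
length `< n` occurs in the prefix of length `n + L + p`, so `∑_{ℓ < n} H^Q_ℓ(w) ≤ n + L + p + 1`.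
A sequence of naturals whose partial sums grow like `n + O(1)` and which is eventually nonzero
can exceed `1` only finitely often.
-/

open Filter Finset

theorem Nat.eventually_eq_zero_of_sum_range_le {g : ℕ → ℕ} {C : ℕ}
    (h : ∀ m, ∑ i ∈ range m, g i ≤ C) : ∀ᶠ n in atTop, g n = 0 := by
  have hs : Summable fun n => (g n : ℝ) :=
    summable_of_sum_range_le (c := C) (fun n => Nat.cast_nonneg _) fun m => by exact_mod_cast h m
  filter_upwards [hs.tendsto_atTop_zero.eventually (gt_mem_nhds one_pos)] with n hn
  exact Nat.lt_one_iff.mp (by exact_mod_cast hn)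

theorem Nat.frequently_eq_zero_or_eventually_eq_one_of_sum_range_le {f : ℕ → ℕ} {C : ℕ}
    (h : ∀ n, ∑ i ∈ range n, f i ≤ n + C) :
    (∃ᶠ n in atTop, f n = 0) ∨ ∀ᶠ n in atTop, f n = 1 := by
  refine or_iff_not_imp_left.2 fun hzero => ?_
  obtain ⟨N, hN⟩ := eventually_atTop.1 (not_frequently.1 hzero)
  have hexcess : ∀ m, ∑ i ∈ range m, (f (N + i) - 1) ≤ N + C := by
    intro m
    have hsplit : ∑ i ∈ range m, f (N + i) = ∑ i ∈ range m, (f (N + i) - 1) + m :=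
      calc ∑ i ∈ range m, f (N + i) = ∑ i ∈ range m, ((f (N + i) - 1) + 1) :=
            sum_congr rfl fun i _ => by have := hN (N + i) (by omega); omega
        _ = _ := by rw [sum_add_distrib, sum_const, card_range, smul_eq_mul, mul_one]
    have htotal := h (N + m)
    rw [sum_range_add] at htotal
    omega
  obtain ⟨M, hM⟩ := eventually_atTop.1 (eventually_eq_zero_of_sum_range_le hexcess)
  refine eventually_atTop.2 ⟨N + M, fun n hn => ?_⟩
  have hexcess_n := hM (n - N) (by omega)
  have hpos := hN n (by omega)
  rw [Nat.add_sub_cancel' (by omega)] at hexcess_n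
  omega

section Words

variable {A : Type*}

theorem List.suffix_take_of_take_drop_eq {f w : List A} {j : ℕ}
    (h : (w.drop j).take f.length = f) : f <:+ w.take (j + f.length) := by
  have hsuffix := List.drop_suffix j (w.take (j + f.length))
  rwa [List.drop_take, Nat.add_sub_cancel_left, h] at hsuffix

theorem exists_introduces {f P : List A} (hf : f ≠ []) (hfP : f <:+: P) :
    ∃ i, Introduces P i f := by
  classical
  obtain ⟨k, hkP, hk⟩ : ∃ k ≤ P.length, f <:+ P.take k := by
    obtain ⟨s, t, rfl⟩ := hfP
    refine ⟨(s ++ f).length, by simp, ?_⟩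
    rw [List.append_assoc, ← List.append_assoc, List.take_left]
    exact List.suffix_append s f
  have hex : ∃ i, f <:+ P.take i := ⟨k, hk⟩
  set i := Nat.find hex
  have hsuf : f <:+ P.take i := Nat.find_spec hex
  have hik : i ≤ k := Nat.find_min' hex hk
  have hfi : f.length ≤ i := hsuf.length_le.trans (List.length_take_le _ _)
  have hlen : (P.take i).length = i := by rw [List.length_take]; omega
  -- an occurrence ending before position `i` would contradict the minimality of `i`
  have hunique : ∀ j, j + f.length ≤ i → ((P.take i).drop j).take f.length = f →
      j = i - f.length := by
    intro j hj hocc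
    have hearlier := List.suffix_take_of_take_drop_eq hocc
    rw [List.take_take, min_eq_left hj] at hearlier
    have := Nat.find_min' hex hearlier
    omega
  refine ⟨i, ?_, by omega, hsuf, ?_⟩
  · have := List.length_pos_iff.2 hf
    omega
  · have hoccurrences : {j | j + f.length ≤ (P.take i).length ∧
        ((P.take i).drop j).take f.length = f} = {i - f.length} := by
      ext j
      simp only [Set.mem_ofPred_eq, Set.mem_singleton_iff, hlen]
      refine ⟨fun ⟨hj, hocc⟩ => hunique j hj hocc, ?_⟩
      rintro rfl
      refine ⟨by omega, ?_⟩
      have hdrop := List.suffix_iff_eq_drop.1 hsuf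
      rw [hlen] at hdrop
      rw [← hdrop, List.take_length]
    rw [occCount, hoccurrences, Set.ncard_singleton]

theorem IsQProperty.ncard_factors_le {Q : List A → Prop} (hQ : IsQProperty Q) (P : List A) :
    {f | f <:+: P ∧ Q f}.ncard ≤ P.length + 1 := by
  classical
  choose! pos hpos using fun f (hf : f ≠ [] ∧ f <:+: P) => exists_introduces hf.1 hf.2
  let φ f := if f = [] then 0 else pos f
  calc {f | f <:+: P ∧ Q f}.ncard ≤ ((range (P.length + 1) : Finset ℕ) : Set ℕ).ncard := by
        refine Set.ncard_le_ncard_of_injOn φ (fun f hf => ?_) (fun f hf g hg hfg => ?_)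
        · by_cases hnil : f = []
          · simp [φ, hnil]
          · simpa [φ, hnil, Nat.lt_succ_iff] using (hpos f ⟨hnil, hf.1⟩).2.1
        · by_cases hfnil : f = [] <;> by_cases hgnil : g = [] <;>
            simp only [φ, hfnil, hgnil, if_true, if_false] at hfg
          · rw [hfnil, hgnil]
          · exact absurd hfg.symm (Nat.one_le_iff_ne_zero.1 (hpos g ⟨hgnil, hg.1⟩).1)
          · exact absurd hfg (Nat.one_le_iff_ne_zero.1 (hpos f ⟨hfnil, hf.1⟩).1)
          · exact hQ.introduces_at_most_one P _ f g (hpos f ⟨hfnil, hf.1⟩)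
              (hfg ▸ hpos g ⟨hgnil, hg.1⟩) hf.2 hg.2
    _ = P.length + 1 := by rw [Set.ncard_coe_finset, card_range]

theorem UltimatelyPeriodic.exists_period {w : ℕ → A} (hw : UltimatelyPeriodic w) :
    ∃ L p, 0 < p ∧ ∀ n, L ≤ n → w (n + p) = w n := by
  obtain ⟨u, v, hv, hval⟩ := hw
  refine ⟨u.length, v.length, List.length_pos_iff.2 hv, fun n hn => ?_⟩
  rw [hval, hval n, if_neg (by omega), if_neg (by omega), Nat.sub_add_comm hn, Nat.add_mod_right]

section Periodic

variable {w : ℕ → A} {L p : ℕ}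

theorem exists_start_lt_of_periodic (hp : 0 < p) (hper : ∀ n, L ≤ n → w (n + p) = w n)
    (i : ℕ) : ∃ j < L + p, ∀ k, w (j + k) = w (i + k) := by
  induction i using Nat.strong_induction_on with
  | _ i ih =>
    by_cases hi : i < L + p
    · exact ⟨i, hi, fun _ => rfl⟩
    · obtain ⟨j, hj, hjk⟩ := ih (i - p) (by omega)
      refine ⟨j, hj, fun k => ?_⟩
      rw [hjk, ← hper _ (by omega), show i - p + k + p = i + k by omega]

theorem IsFactorInf.isInfix_map_range (hp : 0 < p) (hper : ∀ n, L ≤ n → w (n + p) = w n)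
    {f : List A} (hf : IsFactorInf w f) {m : ℕ}
    (hm : L + p + f.length ≤ m) : f <:+: (List.range m).map w := by
  obtain ⟨i, hi⟩ := hf
  obtain ⟨j, hj, hjk⟩ := exists_start_lt_of_periodic hp hper i
  have hwindow : f = (((List.range m).map w).drop j).take f.length := by
    nth_rewrite 1 [hi]
    apply List.ext_getElem
    · simp only [List.length_map, List.length_range, List.length_take, List.length_drop]
      omega
    · intro k _ _
      simp [hjk]
  rw [hwindow]
  exact (List.take_prefix _ _).isInfix.trans (List.drop_suffix _ _).isInfix

theorem sum_range_qComplexityInf_le (hp : 0 < p) (hper : ∀ n, L ≤ n → w (n + p) = w n)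
    {Q : List A → Prop} (hQ : IsQProperty Q) (n : ℕ) :
    ∑ ℓ ∈ range n, qComplexityInf w Q ℓ ≤ n + (L + p + 1) := by
  classical
  set P := (List.range (n + L + p)).map w
  have hfin : {f | f <:+: P ∧ Q f}.Finite :=
    (List.finite_toSet P.sublists).subset fun f hf => List.mem_sublists.2 hf.1.sublist
  set S := hfin.toFinset
  have hfiber : ∀ ℓ ∈ range n, qComplexityInf w Q ℓ ≤ #{f ∈ S | f.length = ℓ} := by
    intro ℓ hℓ
    rw [qComplexityInf, ← Set.ncard_coe_finset]
    refine Set.ncard_le_ncard (fun f ⟨hf, hQf, hlen⟩ => ?_) (Finset.finite_toSet _)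
    rw [mem_range] at hℓ
    simp only [coe_filter, Set.Finite.mem_toFinset, S]
    exact ⟨⟨hf.isInfix_map_range hp hper (by omega), hQf⟩, hlen⟩
  calc ∑ ℓ ∈ range n, qComplexityInf w Q ℓ
        ≤ ∑ ℓ ∈ range n, #{f ∈ S | f.length = ℓ} := sum_le_sum hfiber
    _ ≤ #S := by
        simpa only [card_eq_sum_ones] using
          sum_fiberwise_le_sum_of_sum_fiber_nonneg (s := S) (t := range n) (g := List.length)
            (f := fun _ => 1) fun _ _ => Nat.zero_le _
    _ = {f | f <:+: P ∧ Q f}.ncard := (Set.ncard_eq_toFinset_card _ hfin).symm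
    _ ≤ P.length + 1 := hQ.ncard_factors_le P
    _ = n + (L + p + 1) := by simp [P, Nat.add_assoc]

end Periodic

end Words

theorem q_complexity_of_ultimately_periodic_general {A : Type*} (Q : List A → Prop)
    (hQ : IsQProperty Q) (w : ℕ → A) (hw : UltimatelyPeriodic w) :
    (∀ N : ℕ, ∃ n : ℕ, N ≤ n ∧ qComplexityInf w Q n = 0) ∨
    (∃ k : ℕ, ∀ n : ℕ, k ≤ n → qComplexityInf w Q n = 1) := by
  obtain ⟨L, p, hp, hper⟩ := hw.exists_period
  simpa only [frequently_atTop, eventually_atTop] using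
    Nat.frequently_eq_zero_or_eventually_eq_one_of_sum_range_le
      (sum_range_qComplexityInf_le hp hper hQ)

/-- For a Q-property `Q` and an ultimately periodic infinite word `w`
(over a finite alphabet), either `H^Q_n(w) = 0` for infinitely many `n`, or there
exists `k` such that `H^Q_n(w) = 1` for all `n ≥ k`. -/
theorem q_complexity_of_ultimately_periodic {A : Type*} [Fintype A] (Q : List A → Prop)
    (hQ : IsQProperty Q) (w : ℕ → A) (hw : UltimatelyPeriodic w) :
    (∀ N : ℕ, ∃ n : ℕ, N ≤ n ∧ qComplexityInf w Q n = 0) ∨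
    (∃ k : ℕ, ∀ n : ℕ, k ≤ n → qComplexityInf w Q n = 1) :=
  q_complexity_of_ultimately_periodic_general Q hQ w hw
end

section
/- Let w be an infinite word whose palindromic complexity satisfies P_n(w) = 1 for all even n ≥ 0 and P_n(w) = 2 for all odd n ≥ 1. Then w is aperiodic. -/
/-!
Once a word is periodic with preperiod `s` and period `q`, every factor of length at most `N`
already occurs in its prefix of length `s + q + N`. A finite word of length `L` has at most
`L + 1` palindromic factors, so an ultimately periodic word has at most `N + O(1)` palindromic
factors of length at most `N`, whereas the prescribed complexity yields `3M + 1` of them for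
`N = 2M`.
-/

section Palindromes

variable {α : Type*}

def palindromicInfixes (z : List α) : Set (List α) :=
  {p | p <:+: z ∧ p.reverse = p}

theorem List.IsPrefix.infix_of_ne_of_suffix_concat {p l t : List α} {a : α}
    (hpl : p <+: l) (hne : p ≠ l) (hl : l <:+ t ++ [a]) : p <:+: t := by
  obtain ⟨r, rfl⟩ := hpl
  obtain ⟨r', b, rfl⟩ := r.eq_nil_or_concat.resolve_left (by rintro rfl; simp at hne)
  obtain ⟨c, hc⟩ := hl
  exact ⟨c, r', (List.append_inj' (by simpa using hc : c ++ p ++ r' ++ [b] = t ++ [a]) rfl).1⟩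

theorem List.IsSuffix.prefix_of_reverse_eq {p l : List α} (h : p <:+ l)
    (hp : p.reverse = p) (hl : l.reverse = l) : p <+: l :=
  List.reverse_suffix.mp (by rwa [hp, hl])

/-- Among two palindromic suffixes of a word, the shorter is also a prefix of the longer one,
hence occurs strictly before the last letter: only the longest can be new. -/
theorem subsingleton_palindromicInfixes_concat_diff (t : List α) (a : α) :
    (palindromicInfixes (t ++ [a]) \ palindromicInfixes t).Subsingleton := by
  suffices key : ∀ p ∈ palindromicInfixes (t ++ [a]) \ palindromicInfixes t,
      ∀ l ∈ palindromicInfixes (t ++ [a]) \ palindromicInfixes t, p.length ≤ l.length → p = l by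
    intro p hp l hl
    rcases le_total p.length l.length with h | h
    exacts [key p hp l hl h, (key l hl p hp h).symm]
  rintro p ⟨⟨hpt, hp⟩, hpn⟩ l ⟨⟨hlt, hl⟩, hln⟩ hlen
  have hps : p <:+ t ++ [a] := (List.infix_concat_iff.mp hpt).resolve_right fun h => hpn ⟨h, hp⟩
  have hls : l <:+ t ++ [a] := (List.infix_concat_iff.mp hlt).resolve_right fun h => hln ⟨h, hl⟩
  by_contra hne
  have hpl : p <+: l := (List.suffix_of_suffix_length_le hps hls hlen).prefix_of_reverse_eq hp hl
  exact hpn ⟨hpl.infix_of_ne_of_suffix_concat hne hls, hp⟩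

theorem encard_palindromicInfixes_le (z : List α) :
    (palindromicInfixes z).encard ≤ z.length + 1 := by
  induction z using List.reverseRecOn with
  | nil =>
    have : palindromicInfixes ([] : List α) = {[]} := by
      ext p; simp +contextual [palindromicInfixes]
    simp [this]
  | append_singleton t a ih =>
    calc (palindromicInfixes (t ++ [a])).encard
        ≤ (palindromicInfixes t ∪ (palindromicInfixes (t ++ [a]) \ palindromicInfixes t)).encard :=
          Set.encard_le_encard (Set.sdiff_subset_iff.mp subset_rfl)
      _ ≤ (palindromicInfixes t).encard + 1 :=
          (Set.encard_union_le _ _).trans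
            (add_le_add_right (Set.encard_le_one_iff_subsingleton.mpr
              (subsingleton_palindromicInfixes_concat_diff t a)) _)
      _ ≤ (t ++ [a]).length + 1 := by
          simpa using add_le_add_right ih 1

theorem finite_palindromicInfixes (z : List α) : (palindromicInfixes z).Finite :=
  Set.finite_of_encard_le_coe (encard_palindromicInfixes_le z)

theorem ncard_palindromicInfixes_le (z : List α) :
    (palindromicInfixes z).ncard ≤ z.length + 1 := by
  have := encard_palindromicInfixes_le z
  rw [← (finite_palindromicInfixes z).cast_ncard_eq] at this
  exact_mod_cast this

end Palindromes

section InfiniteWords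

variable {A : Type*}

theorem UltimatelyPeriodic.exists_eventual_period {w : ℕ → A} (h : UltimatelyPeriodic w) :
    ∃ s q : ℕ, 0 < q ∧ ∀ m, s ≤ m → w (m + q) = w m := by
  obtain ⟨u, v, hv, hw⟩ := h
  refine ⟨u.length, v.length, List.length_pos_iff.mpr hv, fun m hm => ?_⟩
  rw [hw m, hw (m + v.length), if_neg (by omega), if_neg (by omega),
    show m + v.length - u.length = m - u.length + v.length by omega, Nat.add_mod_right]

theorem exists_window_eq_of_eventual_period {w : ℕ → A} {s q : ℕ} (hq : 0 < q)
    (hper : ∀ m, s ≤ m → w (m + q) = w m) (i : ℕ) :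
    ∃ j < s + q, ∀ k, w (j + k) = w (i + k) := by
  induction i using Nat.strong_induction_on with
  | _ i ih =>
    by_cases hi : i < s + q
    · exact ⟨i, hi, fun k => rfl⟩
    obtain ⟨j, hj, hjk⟩ := ih (i - q) (by omega)
    refine ⟨j, hj, fun k => ?_⟩
    rw [hjk k, ← hper (i - q + k) (by omega)]
    congr 1
    omega

theorem map_range_add_infix_map_range (w : ℕ → A) {i n M : ℕ} (h : i + n ≤ M) :
    ((List.range n).map fun k => w (i + k)) <:+: (List.range M).map w := by
  obtain ⟨d, rfl⟩ := Nat.exists_eq_add_of_le h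
  refine ⟨(List.range i).map w, ((List.range d).map (i + n + ·)).map w, ?_⟩
  simp [List.range_add, List.map_map, Function.comp_def, List.append_assoc]

theorem IsFactorInf.infix_of_eventual_period {w : ℕ → A} {s q N : ℕ} {u : List A}
    (hq : 0 < q) (hper : ∀ m, s ≤ m → w (m + q) = w m) (hu : IsFactorInf w u)
    (hN : u.length ≤ N) : u <:+: (List.range (s + q + N)).map w := by
  obtain ⟨i, hi⟩ := hu
  obtain ⟨j, hj, hji⟩ := exists_window_eq_of_eventual_period hq hper i
  rw [hi, List.map_congr_left fun k _ => (hji k).symm]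
  exact map_range_add_infix_map_range w (by simpa using (by omega : j + u.length ≤ s + q + N))

theorem sum_palComplexityInf_le_of_forall_infix {w : ℕ → A} {N : ℕ} {z : List A}
    (hz : ∀ u, IsFactorInf w u → u.length ≤ N → u <:+: z) :
    ∑ n ∈ Finset.range (N + 1), palComplexityInf w n ≤ z.length + 1 := by
  set S : ℕ → Set (List A) := fun n => {u | IsFactorInf w u ∧ u.reverse = u ∧ u.length = n}
  have hS : ∀ n ∈ (Finset.range (N + 1) : Set ℕ), S n ⊆ palindromicInfixes z := by
    rintro n hn u ⟨hu, hpal, rfl⟩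
    exact ⟨hz u hu (by simpa [Nat.lt_succ_iff] using hn), hpal⟩
  have hdisj : (Finset.range (N + 1) : Set ℕ).PairwiseDisjoint S := by
    intro m _ n _ hmn
    exact Set.disjoint_left.mpr fun u hm hn => hmn (hm.2.2.symm.trans hn.2.2)
  calc ∑ n ∈ Finset.range (N + 1), palComplexityInf w n
      = (⋃ n ∈ (Finset.range (N + 1) : Set ℕ), S n).ncard := by
        rw [(Finset.finite_toSet _).ncard_biUnion
          (fun n hn => (finite_palindromicInfixes z).subset (hS n hn)) hdisj,
          finsum_mem_coe_finset]
        rfl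
    _ ≤ (palindromicInfixes z).ncard :=
        Set.ncard_le_ncard (Set.iUnion₂_subset hS) (finite_palindromicInfixes z)
    _ ≤ z.length + 1 := ncard_palindromicInfixes_le z

theorem UltimatelyPeriodic.sum_palComplexityInf_le {w : ℕ → A} (h : UltimatelyPeriodic w) :
    ∃ C, ∀ N, ∑ n ∈ Finset.range (N + 1), palComplexityInf w n ≤ N + C := by
  obtain ⟨s, q, hq, hper⟩ := h.exists_eventual_period
  refine ⟨s + q + 1, fun N => ?_⟩
  have := sum_palComplexityInf_le_of_forall_infix (N := N)
    fun u hu hN => hu.infix_of_eventual_period hq hper hN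
  simp only [List.length_map, List.length_range] at this
  omega

end InfiniteWords

theorem sum_range_ite_even (M : ℕ) :
    ∑ n ∈ Finset.range (2 * M + 1), (if Even n then 1 else 2) = 3 * M + 1 := by
  induction M with
  | zero => simp
  | succ m ih =>
    rw [show 2 * (m + 1) + 1 = 2 * m + 1 + 1 + 1 by ring, Finset.sum_range_succ,
      Finset.sum_range_succ, ih, if_neg (by simp [parity_simps]), if_pos (by simp [parity_simps])]
    ring

theorem pal_complexity_implies_aperiodic_general {A : Type*} (w : ℕ → A)
    (h : ∀ n : ℕ, palComplexityInf w n = if Even n then 1 else 2) :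
    ¬ UltimatelyPeriodic w := by
  intro hw
  obtain ⟨C, hC⟩ := hw.sum_palComplexityInf_le
  have hsum := hC (2 * C)
  rw [Finset.sum_congr rfl fun n _ => h n, sum_range_ite_even] at hsum
  omega

/-- An infinite word whose palindromic complexity is 1 for even lengths and
2 for odd lengths is aperiodic. -/
theorem pal_complexity_implies_aperiodic {A : Type*} [Fintype A] (w : ℕ → A)
    (h : ∀ n : ℕ, palComplexityInf w n = if Even n then 1 else 2) :
    ¬ UltimatelyPeriodic w :=
  pal_complexity_implies_aperiodic_general w h
end
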